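/- arXiv:0911.3350 — 7 statements merged into one kernel-verified Lean document; each statement's English description precedes it below -/
import Mathlib

section
/- Let m ≥ 2, let t be an integer with 2 ≤ t ≤ m, and let ε_{t+1}, ε_{t+2}, …, ε_m be integers satisfying 1 ≤ ε_{t+1} < ε_{t+2} < … < ε_m ≤ m−2. Then the set B = {{i−1, i} : 1 ≤ i ≤ t} ∪ {{t+j−1−ε_{t+j}, t+j+ε_{t+j}} : 1 ≤ j ≤ m−t} (indices taken in ZMod (2m)) is a blocker in CK(2m). -/
def inArc (n : ℕ) (a b z : ZMod n) : Prop :=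
  0 < (z - a).val ∧ (z - a).val < (b - a).val

def Cross (n : ℕ) (e f : Sym2 (ZMod n)) : Prop :=
  ∃ a b c d : ZMod n, e = s(a, b) ∧ f = s(c, d) ∧
    a ≠ b ∧ a ≠ c ∧ a ≠ d ∧ b ≠ c ∧ b ≠ d ∧ c ≠ d ∧
    Xor' (inArc n a b c) (inArc n a b d)

def IsSPM (m : ℕ) (M : Finset (Sym2 (ZMod (2 * m)))) : Prop :=
  M.card = m ∧
  (∀ e ∈ M, ¬ e.IsDiag) ∧
  (∀ v : ZMod (2 * m), ∃! e, e ∈ M ∧ v ∈ e) ∧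
  (∀ e ∈ M, ∀ f ∈ M, ¬ Cross (2 * m) e f)

def IsBlockingSet (m : ℕ) (B : Set (Sym2 (ZMod (2 * m)))) : Prop :=
  (∀ e ∈ B, ¬ e.IsDiag) ∧
  ∀ M : Finset (Sym2 (ZMod (2 * m))), IsSPM m M → ∃ e ∈ M, e ∈ B

def IsBlocker (m : ℕ) (B : Finset (Sym2 (ZMod (2 * m)))) : Prop :=
  IsBlockingSet m (B : Set (Sym2 (ZMod (2 * m)))) ∧ B.card = m

def IsBoundaryEdge (m : ℕ) (e : Sym2 (ZMod (2 * m))) : Prop :=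
  ∃ i : ZMod (2 * m), e = s(i, i + 1)

def edgeOrder {n : ℕ} (e : Sym2 (ZMod n)) : ℕ :=
  Sym2.lift ⟨fun i j => min (i - j).val (j - i).val, fun i j => min_comm _ _⟩ e

def edgeSum {n : ℕ} (e : Sym2 (ZMod n)) : ZMod n :=
  Sym2.lift ⟨fun i j => i + j, fun i j => add_comm i j⟩ e

lemma zval_sub_lt {n : ℕ} [NeZero n] {a z : ZMod n} (h : z.val < a.val) :
    (z - a).val = z.val + n - a.val := by
  have ha : a.val < n := ZMod.val_lt a
  have h1 : ((z.val + n - a.val : ℕ) : ZMod n) = z - a := by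
    rw [Nat.cast_sub (by omega)]
    push_cast
    rw [ZMod.natCast_val, ZMod.natCast_val, ZMod.natCast_self, ZMod.cast_id, ZMod.cast_id]
    ring
  rw [← h1, ZMod.val_cast_of_lt (by omega)]

lemma inArc_iff' {n : ℕ} [NeZero n] {a b z : ZMod n} (hab : a.val < b.val) :
    inArc n a b z ↔ (a.val < z.val ∧ z.val < b.val) := by
  have hb : b.val < n := ZMod.val_lt b
  have hsub : (b - a).val = b.val - a.val := ZMod.val_sub (le_of_lt hab)
  unfold inArc
  rw [hsub]
  rcases lt_or_ge z.val a.val with h | h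
  · rw [zval_sub_lt h]; omega
  · rw [ZMod.val_sub h]; omega

lemma partner_exists (m : ℕ) (M : Finset (Sym2 (ZMod (2 * m)))) (hM : IsSPM m M) :
    ∃ pa : ZMod (2 * m) → ZMod (2 * m),
      (∀ v, s(v, pa v) ∈ M) ∧ (∀ v, pa v ≠ v) ∧
      (∀ v w, s(v, w) ∈ M → w ≠ v → w = pa v) := by
  obtain ⟨-, hdiag, huniq, -⟩ := hM
  have hex : ∀ v : ZMod (2 * m), ∃ w, s(v, w) ∈ M ∧ w ≠ v := by
    intro v
    obtain ⟨e, ⟨heM, hev⟩, -⟩ := huniq v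
    obtain ⟨w, rfl⟩ := Sym2.mem_iff_exists.mp hev
    refine ⟨w, heM, fun h => hdiag _ heM ?_⟩
    rw [h]; exact Sym2.mk_isDiag_iff.mpr rfl
  choose pa hpa1 hpa2 using hex
  refine ⟨pa, hpa1, hpa2, fun v w hvw hne => ?_⟩
  obtain ⟨e, -, hu⟩ := huniq v
  have h1 : s(v, w) = s(v, pa v) := by
    rw [hu s(v, w) ⟨hvw, Sym2.mem_mk_left v w⟩, hu s(v, pa v) ⟨hpa1 v, Sym2.mem_mk_left _ _⟩]
  rcases Sym2.eq_iff.mp h1 with ⟨-, h⟩ | ⟨h2, h3⟩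
  · exact h
  · exact absurd h2.symm (hpa2 v)

def BB (m t : ℕ) (ε : ℕ → ℕ) : Finset (Sym2 (ZMod (2 * m))) :=
  (Finset.Icc 1 t).image
      (fun i : ℕ => s((i : ZMod (2 * m)) - 1, (i : ZMod (2 * m)))) ∪
    (Finset.Icc 1 (m - t)).image
      (fun j : ℕ => s((t : ZMod (2 * m)) + (j : ZMod (2 * m)) - 1
                        - (ε (t + j) : ZMod (2 * m)),
                      (t : ZMod (2 * m)) + (j : ZMod (2 * m))
                        + (ε (t + j) : ZMod (2 * m))))

lemma main_aux (m t : ℕ) (hm : 2 ≤ m) (ht2 : 2 ≤ t) (htm : t ≤ m)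
    (ε : ℕ → ℕ)
    (hε : ∀ j, t + 1 ≤ j → j ≤ m → 1 ≤ ε j ∧ ε j ≤ m - 2)
    (hmono : ∀ j, t + 1 ≤ j → j + 1 ≤ m → ε j < ε (j + 1))
    (M : Finset (Sym2 (ZMod (2 * m)))) (hM : IsSPM m M)
    (hNo : ∀ e ∈ M, e ∉ BB m t ε) : False := by
  haveI : NeZero (2 * m) := ⟨by omega⟩
  have hcross := hM.2.2.2
  obtain ⟨pa, hpa1, hpa2, hpa3⟩ := partner_exists m M hM
  have cv : ∀ a : ℕ, a < 2 * m → ((a : ZMod (2 * m))).val = a :=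
    fun a ha => ZMod.val_cast_of_lt ha
  have nech : ∀ a b : ℕ, a < 2 * m → b < 2 * m → a ≠ b →
      (a : ZMod (2 * m)) ≠ (b : ZMod (2 * m)) := by
    intro a b ha hb hne h
    apply hne
    have := congrArg ZMod.val h
    rwa [cv a ha, cv b hb] at this
  have arcIff : ∀ a b c : ℕ, a < 2 * m → b < 2 * m → c < 2 * m → a < b →
      (inArc (2 * m) (a : ZMod (2 * m)) (b : ZMod (2 * m)) (c : ZMod (2 * m)) ↔
        (a < c ∧ c < b)) := by
    intro a b c ha hb hc hab
    have h := inArc_iff' (n := 2 * m) (a := (a : ZMod (2 * m))) (b := (b : ZMod (2 * m)))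
      (z := (c : ZMod (2 * m))) (by rw [cv a ha, cv b hb]; exact hab)
    rwa [cv a ha, cv b hb, cv c hc] at h
  have hpainv : ∀ v, pa (pa v) = v := by
    intro v
    have h := hpa3 (pa v) v (by rw [Sym2.eq_swap]; exact hpa1 v) (Ne.symm (hpa2 v))
    exact h.symm
  set P : ℕ → ℕ := fun z => (pa ((z : ℕ) : ZMod (2 * m))).val with hPdef
  have P1 : ∀ z : ℕ, P z < 2 * m := fun z => ZMod.val_lt _
  have hcastP : ∀ z : ℕ, ((P z : ℕ) : ZMod (2 * m)) = pa ((z : ℕ) : ZMod (2 * m)) := by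
    intro z
    simp only [hPdef]
    rw [ZMod.natCast_val, ZMod.cast_id]
  have P2 : ∀ z : ℕ, s(((z : ℕ) : ZMod (2 * m)), ((P z : ℕ) : ZMod (2 * m))) ∈ M := by
    intro z; rw [hcastP]; exact hpa1 _
  have P3 : ∀ v w : ℕ, v < 2 * m → w < 2 * m → w ≠ v →
      s(((v : ℕ) : ZMod (2 * m)), ((w : ℕ) : ZMod (2 * m))) ∈ M → P v = w := by
    intro v w hv hw hne hmem
    have h1 : ((w : ℕ) : ZMod (2 * m)) = pa ((v : ℕ) : ZMod (2 * m)) :=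
      hpa3 _ _ hmem (nech w v hw hv hne)
    have h2 := congrArg ZMod.val h1
    rw [cv w hw] at h2
    simp only [hPdef]
    exact h2.symm
  have P4 : ∀ z : ℕ, z < 2 * m → P z ≠ z := by
    intro z hz h
    have h1 := hcastP z
    rw [h] at h1
    exact hpa2 _ h1.symm
  have P5 : ∀ z : ℕ, z < 2 * m → P (P z) = z := by
    intro z hz
    have h1 : ((P (P z) : ℕ) : ZMod (2 * m)) = ((z : ℕ) : ZMod (2 * m)) := by
      rw [hcastP, hcastP, hpainv]
    have h2 := congrArg ZMod.val h1
    rwa [cv _ (P1 _), cv z hz] at h2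
  have crossOut : ∀ x u z : ℕ, x < u → u < 2 * m →
      s(((x : ℕ) : ZMod (2 * m)), ((u : ℕ) : ZMod (2 * m))) ∈ M →
      x < z → z < u → x < P z ∧ P z < u := by
    intro x u z hxu hu hedge hxz hzu
    have hPxu : P x = u := P3 x u (by omega) hu (by omega) hedge
    have hPux : P u = x := P3 u x hu (by omega) (by omega)
      (by rw [Sym2.eq_swap]; exact hedge)
    have hPz_x : P z ≠ x := by
      intro h
      have h5 := P5 z (by omega)
      rw [h, hPxu] at h5
      omega
    have hPz_u : P z ≠ u := by
      intro h
      have h5 := P5 z (by omega)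
      rw [h, hPux] at h5
      omega
    by_contra hcon
    have hedge2 := P2 z
    apply hcross _ hedge _ hedge2
    refine ⟨((x : ℕ) : ZMod (2 * m)), ((u : ℕ) : ZMod (2 * m)), ((z : ℕ) : ZMod (2 * m)),
      ((P z : ℕ) : ZMod (2 * m)), rfl, rfl,
      nech x u (by omega) hu (by omega),
      nech x z (by omega) (by omega) (by omega),
      nech x (P z) (by omega) (P1 z) (Ne.symm hPz_x),
      nech u z hu (by omega) (by omega),
      nech u (P z) hu (P1 z) (Ne.symm hPz_u),
      nech z (P z) (by omega) (P1 z) (Ne.symm (P4 z (by omega))), ?_⟩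
    exact Or.inl ⟨(arcIff x u z (by omega) hu (by omega) hxu).mpr ⟨hxz, hzu⟩,
      fun hin => hcon ((arcIff x u (P z) (by omega) hu (P1 z) hxu).mp hin)⟩
  -- avoidance of boundary edges
  have hBd : ∀ i : ℕ, 1 ≤ i → i ≤ t →
      s(((i - 1 : ℕ) : ZMod (2 * m)), ((i : ℕ) : ZMod (2 * m))) ∉ M := by
    intro i h1 h2 hmem
    refine hNo _ hmem (Finset.mem_union_left _ (Finset.mem_image.mpr
      ⟨i, Finset.mem_Icc.mpr ⟨h1, h2⟩, ?_⟩))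
    have h3 : ((i - 1 : ℕ) : ZMod (2 * m)) = (i : ZMod (2 * m)) - 1 := by
      rw [Nat.cast_sub h1]; push_cast; ring
    rw [h3]
  have hLong : ∀ k : ℕ, t + 1 ≤ k → k ≤ m → ε k + 2 ≤ k →
      s(((k - 1 - ε k : ℕ) : ZMod (2 * m)), ((k + ε k : ℕ) : ZMod (2 * m))) ∉ M := by
    intro k hk1 hk2 hk3 hmem
    refine hNo _ hmem (Finset.mem_union_right _ (Finset.mem_image.mpr
      ⟨k - t, Finset.mem_Icc.mpr ⟨by omega, by omega⟩, ?_⟩))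
    have hidx : t + (k - t) = k := by omega
    rw [hidx]
    have e1 : ((k - 1 - ε k : ℕ) : ZMod (2 * m)) =
        (t : ZMod (2 * m)) + ((k - t : ℕ) : ZMod (2 * m)) - 1 - (ε k : ZMod (2 * m)) := by
      rw [show k - 1 - ε k = k - (1 + ε k) by omega, Nat.cast_sub (by omega),
        show ((k : ℕ) : ZMod (2 * m)) = (t : ZMod (2 * m)) + ((k - t : ℕ) : ZMod (2 * m)) by
          rw [← Nat.cast_add, show t + (k - t) = k by omega]]
      push_cast
      ring
    have e2 : ((k + ε k : ℕ) : ZMod (2 * m)) =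
        (t : ZMod (2 * m)) + ((k - t : ℕ) : ZMod (2 * m)) + (ε k : ZMod (2 * m)) := by
      rw [show ((k + ε k : ℕ) : ZMod (2 * m)) = ((k : ℕ) : ZMod (2 * m)) + (ε k : ZMod (2 * m))
        by push_cast; ring,
        show ((k : ℕ) : ZMod (2 * m)) = (t : ZMod (2 * m)) + ((k - t : ℕ) : ZMod (2 * m)) by
          rw [← Nat.cast_add, show t + (k - t) = k by omega]]
    rw [e1, e2]
  -- epsilon bounds
  have hmono' : ∀ a b : ℕ, t + 1 ≤ a → a ≤ b → b ≤ m → ε a + (b - a) ≤ ε b := by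
    intro a b ha hab
    induction b, hab using Nat.le_induction with
    | base => intro _; simp
    | succ b hb ih =>
      intro hbm
      have h1 := hmono b (by omega) (by omega)
      have h2 := ih (by omega)
      omega
  have hδub : ∀ k, t + 1 ≤ k → k ≤ m → ε k + 2 ≤ k := by
    intro k h1 h2
    have h3 := hmono' k m h1 h2 le_rfl
    have h4 := (hε m (by omega) le_rfl).2
    omega
  have hδlb : ∀ k, t + 1 ≤ k → k ≤ m → k - t ≤ ε k := by
    intro k h1 h2
    have h3 := hmono' (t + 1) k le_rfl h1 h2
    have h4 := (hε (t + 1) le_rfl (by omega)).1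
    omega
  -- parity
  have evenInt : ∀ d x y : ℕ, y - x = d → y ≤ 2 * m →
      (∀ z, x ≤ z → z < y → (x ≤ P z ∧ P z < y)) → Even (y - x) := by
    intro d
    induction d using Nat.strong_induction_on with
    | _ d ih =>
      intro x y hd hy hself
      rcases le_or_gt y x with hyx | hxy
      · simp [Nat.sub_eq_zero_of_le hyx]
      · have hu := hself x le_rfl hxy
        have hux : P x ≠ x := P4 x (by omega)
        have hxu : x < P x := by omega
        have huy : P x < y := hu.2
        have hedge := P2 x
        have hPux : P (P x) = x := P5 x (by omega)
        have hS1 : ∀ z, x + 1 ≤ z → z < P x → (x + 1 ≤ P z ∧ P z < P x) := by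
          intro z h1 h2
          have := crossOut x (P x) z hxu (by omega) hedge (by omega) h2
          omega
        have hS2 : ∀ z, P x + 1 ≤ z → z < y → (P x + 1 ≤ P z ∧ P z < y) := by
          intro z h1 h2
          have h3 := hself z (by omega) h2
          have h4 : P z ≠ P x := by
            intro h
            have h5 := P5 z (by omega)
            rw [h, hPux] at h5
            omega
          have h6 : P z ≠ x := by
            intro h
            have h5 := P5 z (by omega)
            rw [h] at h5
            omega
          have h7 : ¬(x < P z ∧ P z < P x) := by
            rintro ⟨h8, h9⟩
            have h10 := crossOut x (P x) (P z) hxu (by omega) hedge h8 h9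
            have h5 := P5 z (by omega)
            omega
          omega
        have hE1 := ih (P x - (x + 1)) (by omega) (x + 1) (P x) rfl (by omega) hS1
        have hE2 := ih (y - (P x + 1)) (by omega) (P x + 1) y rfl hy hS2
        obtain ⟨p, hp⟩ := hE1
        obtain ⟨q, hq⟩ := hE2
        exact ⟨p + q + 1, by omega⟩
  have oddEdge : ∀ v, v < 2 * m → v < P v → Odd (P v - v) := by
    intro v hv hvP
    have hedge := P2 v
    have hself : ∀ z, v + 1 ≤ z → z < P v → (v + 1 ≤ P z ∧ P z < P v) := by
      intro z h1 h2
      have := crossOut v (P v) z hvP (P1 v) hedge (by omega) h2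
      omega
    obtain ⟨p, hp⟩ := evenInt (P v - (v + 1)) (v + 1) (P v) rfl (le_of_lt (P1 v)) hself
    exact ⟨p, by omega⟩
  -- claim C
  have hC : ∀ p, 1 ≤ p → p ≤ t → p ≤ P (p - 1) := by
    intro p
    induction p using Nat.strong_induction_on with
    | _ p ih =>
      intro h1 h2
      by_contra hcon
      push_neg at hcon
      have hlt : p - 1 < 2 * m := by omega
      have hWne := P4 (p - 1) hlt
      have hp2 : 2 ≤ p := by
        by_contra hh
        have hp1 : p = 1 := by omega
        subst hp1
        omega
      have hW2 : P (p - 1) ≤ p - 2 := by omega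
      rcases eq_or_lt_of_le hW2 with hEq | hLt
      · have hedge := P2 (p - 1)
        rw [hEq, Sym2.eq_swap] at hedge
        refine hBd (p - 1) (by omega) (by omega) ?_
        rw [show p - 1 - 1 = p - 2 by omega]
        exact hedge
      · have hQ := ih (p - 1) (by omega) (by omega) (by omega)
        rw [show p - 1 - 1 = p - 2 by omega] at hQ
        have hedge := P2 (p - 1)
        rw [Sym2.eq_swap] at hedge
        have hco := crossOut (P (p - 1)) (p - 1) (p - 2) (by omega) (by omega) hedge
          (by omega) (by omega)
        omega
  have hC1 : ∀ p, 1 ≤ p → p ≤ t → p + 1 ≤ P (p - 1) := by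
    intro p h1 h2
    have h3 := hC p h1 h2
    have h4 : P (p - 1) ≠ p := by
      intro h
      have hedge := P2 (p - 1)
      rw [h] at hedge
      exact hBd p h1 h2 hedge
    omega
  have hC3 : ∀ p, 1 ≤ p → p + 1 ≤ t → P p < P (p - 1) := by
    intro p h1 h2
    have hWp := hC1 p h1 (by omega)
    have hWq := hC1 (p + 1) (by omega) h2
    rw [show p + 1 - 1 = p by omega] at hWq
    have hedge := P2 (p - 1)
    have hco := crossOut (p - 1) (P (p - 1)) p (by omega) (P1 _) hedge (by omega) (by omega)
    omega
  have hC3' : ∀ p q, 1 ≤ p → p ≤ q → q ≤ t → P (q - 1) + (q - p) ≤ P (p - 1) := by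
    intro p q hp hpq
    induction q, hpq using Nat.le_induction with
    | base => intro _; simp
    | succ q hq ih =>
      intro hqt
      have h3 := hC3 q (by omega) (by omega)
      have h4 := ih (by omega)
      rw [show q + 1 - 1 = q by omega]
      omega
  have hC4 : ∀ p, 1 ≤ p → p ≤ t → 2 * t + 2 - p ≤ P (p - 1) := by
    have ht1 := hC1 t (by omega) le_rfl
    have hodd := oddEdge (t - 1) (by omega) (by omega)
    have ht2' : t + 2 ≤ P (t - 1) := by
      rcases eq_or_lt_of_le ht1 with h | h
      · exfalso
        obtain ⟨c, hc⟩ := hodd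
        omega
      · omega
    intro p h1 h2
    have := hC3' p t h1 h2 le_rfl
    omega
  -- main induction
  have hD : ∀ k, t ≤ k → k ≤ m → ∀ p, 1 ≤ p → p ≤ t → (k ≤ t ∨ p + ε k ≤ k) →
      2 * k + 2 - p ≤ P (p - 1) := by
    intro k hk
    induction k, hk using Nat.le_induction with
    | base => intro _ p h1 h2 _; exact hC4 p h1 h2
    | succ k hk ih =>
      intro hk1 p h1 h2 hp3
      have hp3' : p + ε (k + 1) ≤ k + 1 := hp3.resolve_left (by omega)
      have hεb := hδub (k + 1) (by omega) hk1
      have hεl := hδlb (k + 1) (by omega) hk1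
      have hp'2 : 2 ≤ k + 1 - ε (k + 1) := by omega
      have hp't : k + 1 - ε (k + 1) ≤ t := by omega
      have hpp' : p ≤ k + 1 - ε (k + 1) := by omega
      have hih : 2 * k + 2 - (k + 1 - ε (k + 1)) ≤ P (k + 1 - ε (k + 1) - 1) := by
        apply ih (by omega) _ (by omega) hp't
        rcases Nat.lt_or_ge t k with h | h
        · right
          have := hmono k (by omega) (by omega)
          omega
        · left; omega
      have hne : P (k + 1 - ε (k + 1) - 1) ≠ k + 1 + ε (k + 1) := by
        intro h
        have hedge := P2 (k + 1 - ε (k + 1) - 1)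
        rw [h] at hedge
        refine hLong (k + 1) (by omega) hk1 hεb ?_
        rw [show k + 1 - 1 - ε (k + 1) = k + 1 - ε (k + 1) - 1 by omega]
        exact hedge
      have hoddE := oddEdge (k + 1 - ε (k + 1) - 1) (by omega) (by omega)
      have hstep : 2 * (k + 1) + 2 - (k + 1 - ε (k + 1)) ≤ P (k + 1 - ε (k + 1) - 1) := by
        by_contra hcon
        push_neg at hcon
        obtain ⟨c, hc⟩ := hoddE
        omega
      have hchain := hC3' p (k + 1 - ε (k + 1)) h1 hpp' hp't
      omega
  have hfinal := hD m htm le_rfl 1 le_rfl (by omega) (by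
    rcases Nat.lt_or_ge t m with h | h
    · right
      have := hδub m (by omega) le_rfl
      omega
    · left; omega)
  rw [Nat.sub_self 1] at hfinal
  have := P1 0
  omega

theorem caterpillar_is_blocker (m t : ℕ) (hm : 2 ≤ m) (ht2 : 2 ≤ t) (htm : t ≤ m)
    (ε : ℕ → ℕ)
    (hε : ∀ j, t + 1 ≤ j → j ≤ m → 1 ≤ ε j ∧ ε j ≤ m - 2)
    (hmono : ∀ j, t + 1 ≤ j → j + 1 ≤ m → ε j < ε (j + 1)) :
    IsBlocker m
      ((Finset.Icc 1 t).image
          (fun i : ℕ => s((i : ZMod (2 * m)) - 1, (i : ZMod (2 * m)))) ∪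
        (Finset.Icc 1 (m - t)).image
          (fun j : ℕ => s((t : ZMod (2 * m)) + (j : ZMod (2 * m)) - 1
                            - (ε (t + j) : ZMod (2 * m)),
                          (t : ZMod (2 * m)) + (j : ZMod (2 * m))
                            + (ε (t + j) : ZMod (2 * m))))) := by
  haveI : NeZero (2 * m) := ⟨by omega⟩
  have cv : ∀ a : ℕ, a < 2 * m → ((a : ZMod (2 * m))).val = a :=
    fun a ha => ZMod.val_cast_of_lt ha
  have veq : ∀ a b : ℕ, a < 2 * m → b < 2 * m →
      (a : ZMod (2 * m)) = (b : ZMod (2 * m)) → a = b := by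
    intro a b ha hb h
    have := congrArg ZMod.val h
    rwa [cv a ha, cv b hb] at this
  have hmono' : ∀ a b : ℕ, t + 1 ≤ a → a ≤ b → b ≤ m → ε a + (b - a) ≤ ε b := by
    intro a b ha hab
    induction b, hab using Nat.le_induction with
    | base => intro _; simp
    | succ b hb ih =>
      intro hbm
      have h1 := hmono b (by omega) (by omega)
      have h2 := ih (by omega)
      omega
  have hδub : ∀ k, t + 1 ≤ k → k ≤ m → ε k + 2 ≤ k := by
    intro k h1 h2
    have h3 := hmono' k m h1 h2 le_rfl
    have h4 := (hε m (by omega) le_rfl).2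
    omega
  have hbd_eq : ∀ i : ℕ, 1 ≤ i →
      (i : ZMod (2 * m)) - 1 = ((i - 1 : ℕ) : ZMod (2 * m)) := by
    intro i h1
    rw [Nat.cast_sub h1]
    push_cast
    ring
  have hfst : ∀ j : ℕ, 1 ≤ j → j ≤ m - t →
      (t : ZMod (2 * m)) + (j : ZMod (2 * m)) - 1 - (ε (t + j) : ZMod (2 * m)) =
        ((t + j - 1 - ε (t + j) : ℕ) : ZMod (2 * m)) := by
    intro j h1 h2
    have h3 := hδub (t + j) (by omega) (by omega)
    rw [show t + j - 1 - ε (t + j) = (t + j) - (1 + ε (t + j)) by omega,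
      Nat.cast_sub (by omega)]
    push_cast
    ring
  have hsnd : ∀ j : ℕ,
      (t : ZMod (2 * m)) + (j : ZMod (2 * m)) + (ε (t + j) : ZMod (2 * m)) =
        ((t + j + ε (t + j) : ℕ) : ZMod (2 * m)) := by
    intro j
    push_cast
    ring
  refine ⟨⟨?_, ?_⟩, ?_⟩
  · -- non-diagonal
    intro e he
    rw [Finset.mem_coe, Finset.mem_union] at he
    rcases he with he | he
    · obtain ⟨i, hi, rfl⟩ := Finset.mem_image.mp he
      rw [Finset.mem_Icc] at hi
      rw [Sym2.mk_isDiag_iff, hbd_eq i hi.1]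
      intro h
      have := veq (i - 1) i (by omega) (by omega) h
      omega
    · obtain ⟨j, hj, rfl⟩ := Finset.mem_image.mp he
      rw [Finset.mem_Icc] at hj
      have h3 := hδub (t + j) (by omega) (by omega)
      rw [Sym2.mk_isDiag_iff, hfst j hj.1 hj.2, hsnd j]
      intro h
      have := veq _ _ (by omega) (by omega) h
      omega
  · -- blocking
    intro M hM
    by_contra hcon
    push_neg at hcon
    refine main_aux m t hm ht2 htm ε hε hmono M hM ?_
    intro e he h
    exact hcon e he (Finset.mem_coe.mpr h)
  · -- cardinality
    have hinj1 : Set.InjOn (fun i : ℕ => s((i : ZMod (2 * m)) - 1, (i : ZMod (2 * m))))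
        ↑(Finset.Icc 1 t) := by
      intro i hi i' hi' h
      simp only [Finset.coe_Icc, Set.mem_Icc] at hi hi'
      dsimp only at h
      rw [hbd_eq i hi.1, hbd_eq i' hi'.1] at h
      rcases Sym2.eq_iff.mp h with ⟨h1, h2⟩ | ⟨h1, h2⟩
      · exact veq i i' (by omega) (by omega) h2
      · have e1 := veq (i - 1) i' (by omega) (by omega) h1
        have e2 := veq i (i' - 1) (by omega) (by omega) h2
        omega
    have hinj2 : Set.InjOn (fun j : ℕ => s((t : ZMod (2 * m)) + (j : ZMod (2 * m)) - 1
          - (ε (t + j) : ZMod (2 * m)),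
        (t : ZMod (2 * m)) + (j : ZMod (2 * m)) + (ε (t + j) : ZMod (2 * m))))
        ↑(Finset.Icc 1 (m - t)) := by
      intro j hj j' hj' h
      simp only [Finset.coe_Icc, Set.mem_Icc] at hj hj'
      dsimp only at h
      rw [hfst j hj.1 hj.2, hfst j' hj'.1 hj'.2, hsnd j, hsnd j'] at h
      have h3 := hδub (t + j) (by omega) (by omega)
      have h3' := hδub (t + j') (by omega) (by omega)
      rcases Sym2.eq_iff.mp h with ⟨h1, h2⟩ | ⟨h1, h2⟩
      · have e2 := veq _ _ (by omega) (by omega) h2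
        rcases lt_trichotomy j j' with hlt | heq | hlt
        · have := hmono' (t + j) (t + j') (by omega) (by omega) (by omega)
          omega
        · exact heq
        · have := hmono' (t + j') (t + j) (by omega) (by omega) (by omega)
          omega
      · have e1 := veq _ _ (by omega) (by omega) h1
        have e2 := veq _ _ (by omega) (by omega) h2
        omega
    have hdisj : Disjoint
        ((Finset.Icc 1 t).image
          (fun i : ℕ => s((i : ZMod (2 * m)) - 1, (i : ZMod (2 * m)))))
        ((Finset.Icc 1 (m - t)).image
          (fun j : ℕ => s((t : ZMod (2 * m)) + (j : ZMod (2 * m)) - 1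
                            - (ε (t + j) : ZMod (2 * m)),
                          (t : ZMod (2 * m)) + (j : ZMod (2 * m))
                            + (ε (t + j) : ZMod (2 * m))))) := by
      rw [Finset.disjoint_left]
      intro e he1 he2
      obtain ⟨i, hi, rfl⟩ := Finset.mem_image.mp he1
      obtain ⟨j, hj, hj2⟩ := Finset.mem_image.mp he2
      rw [Finset.mem_Icc] at hi hj
      have h3 := hδub (t + j) (by omega) (by omega)
      rw [hfst j hj.1 hj.2, hsnd j, hbd_eq i hi.1] at hj2
      rcases Sym2.eq_iff.mp hj2 with ⟨h1, h2⟩ | ⟨h1, h2⟩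
      · have e1 := veq _ _ (by omega) (by omega) h1
        have e2 := veq _ _ (by omega) (by omega) h2
        omega
      · have e1 := veq _ _ (by omega) (by omega) h1
        have e2 := veq _ _ (by omega) (by omega) h2
        omega
    rw [Finset.card_union_of_disjoint hdisj, Finset.card_image_of_injOn hinj1,
      Finset.card_image_of_injOn hinj2, Nat.card_Icc, Nat.card_Icc]
    omega
end

section
/- Let m ≥ 2. Every blocking set in CK(2m) contains at least two boundary edges. -/
lemma boundary_not_cross {n : ℕ} (hn : 2 < n) (a : ZMod n) (f : Sym2 (ZMod n)) :
    ¬ Cross n (s(a, a+1)) f := by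
  haveI : NeZero n := ⟨by omega⟩
  haveI : Fact (1 < n) := ⟨by omega⟩
  rintro ⟨x, y, c, d, he, hf, hxy, hxc, hxd, hyc, hyd, hcd, hxor⟩
  have h1 : ((1 : ZMod n)).val = 1 := ZMod.val_one n
  have hneg : ((-1 : ZMod n)).val = n - 1 := by
    obtain ⟨k, rfl⟩ : ∃ k, n = k + 1 := ⟨n - 1, by omega⟩
    simp [ZMod.val_neg_one k]
  rw [Sym2.eq_iff] at he
  rcases he with ⟨rfl, rfl⟩ | ⟨hy, hx⟩
  · have harc : ∀ z, ¬ inArc n a (a+1) z := by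
      intro z hz
      have h2 : a + 1 - a = 1 := by ring
      rw [inArc, h2, h1] at hz
      omega
    rcases hxor with ⟨h, _⟩ | ⟨h, _⟩ <;> exact harc _ h
  · subst hx; subst hy
    -- x = y + 1, e = s(y, y+1); inArc n (y+1) y z holds for z ≠ y+1, z ≠ y
    have harc : ∀ z, z ≠ a + 1 → z ≠ a → inArc n (a+1) a z := by
      intro z hz1 hz2
      have h2 : a - (a + 1) = -1 := by ring
      rw [inArc, h2, hneg]
      constructor
      · exact ZMod.val_pos.mpr (sub_ne_zero.mpr hz1)
      · have hlt : (z - (a+1)).val < n := ZMod.val_lt _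
        have hne : (z - (a+1)).val ≠ n - 1 := by
          intro h
          apply hz2
          have : z - (a + 1) = -1 := ZMod.val_injective n (by rw [h, hneg])
          have := sub_eq_iff_eq_add.mp this
          rw [this]; ring
        omega
    rcases hxor with ⟨_, h⟩ | ⟨_, h⟩
    · exact h (harc d hxd.symm hyd.symm)
    · exact h (harc c hxc.symm hyc.symm)

def bedge (m r i : ℕ) : Sym2 (ZMod (2*m)) :=
  s(((2*i + r : ℕ) : ZMod (2*m)), ((2*i + r : ℕ) : ZMod (2*m)) + 1)

def Mpar (m r : ℕ) : Finset (Sym2 (ZMod (2*m))) := (Finset.range m).image (bedge m r)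

lemma bedge_boundary {m r i : ℕ} : IsBoundaryEdge m (bedge m r i) := by
  exact ⟨_, rfl⟩

lemma mem_bedge_val {m r i : ℕ} (hm : 1 ≤ m) (hr : r ≤ 1) (hi : i < m)
    {v : ZMod (2*m)} (hv : v ∈ bedge m r i) :
    v.val = 2*i + r ∨ (v.val = 2*i + r + 1 ∧ 2*i + r + 1 < 2*m) ∨
      (v.val = 0 ∧ 2*i + r + 1 = 2*m) := by
  haveI : NeZero (2*m) := ⟨by omega⟩
  rw [bedge, Sym2.mem_iff] at hv
  rcases hv with rfl | rfl
  · left; rw [ZMod.val_natCast]; exact Nat.mod_eq_of_lt (by omega)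
  · have h : ((2*i + r : ℕ) : ZMod (2*m)) + 1 = ((2*i + r + 1 : ℕ) : ZMod (2*m)) := by
      push_cast; ring
    rw [h, ZMod.val_natCast]
    rcases Nat.lt_or_ge (2*i+r+1) (2*m) with h2 | h2
    · right; left; exact ⟨Nat.mod_eq_of_lt h2, h2⟩
    · right; right
      have h3 : 2*i + r + 1 = 2*m := by omega
      simp [h3]

lemma exists_bedge {m r : ℕ} (hm : 1 ≤ m) (hr : r ≤ 1) (v : ZMod (2*m)) :
    ∃ i < m, v ∈ bedge m r i := by
  haveI : NeZero (2*m) := ⟨by omega⟩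
  have hv : ((v.val : ℕ) : ZMod (2*m)) = v := ZMod.natCast_rightInverse v
  have hvlt : v.val < 2*m := ZMod.val_lt v
  have hcast : ∀ i : ℕ, ((2*i + r : ℕ) : ZMod (2*m)) + 1 = ((2*i + r + 1 : ℕ) : ZMod (2*m)) := by
    intro i; push_cast; ring
  by_cases h : v.val % 2 = r
  · refine ⟨v.val / 2, by omega, ?_⟩
    rw [bedge, Sym2.mem_iff]
    left
    have h2 : 2*(v.val / 2) + r = v.val := by omega
    rw [h2, hv]
  · by_cases h0 : v.val = 0
    · refine ⟨m - 1, by omega, ?_⟩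
      have hv0 : v = 0 := by rw [← hv, h0]; simp
      rw [bedge, Sym2.mem_iff]
      right
      rw [hcast, hv0]
      have h2 : 2*(m-1) + r + 1 = 2*m := by omega
      rw [h2]
      simp
    · refine ⟨(v.val - 1) / 2, by omega, ?_⟩
      rw [bedge, Sym2.mem_iff]
      right
      rw [hcast]
      have h2 : 2*((v.val - 1) / 2) + r + 1 = v.val := by omega
      rw [h2, hv]

lemma isSPM_Mpar {m r : ℕ} (hm : 2 ≤ m) (hr : r ≤ 1) : IsSPM m (Mpar m r) := by
  haveI : NeZero (2*m) := ⟨by omega⟩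
  have hinj : Set.InjOn (bedge m r) (Finset.range m) := by
    intro i hi j hj hij
    simp only [Finset.coe_range, Set.mem_Iio] at hi hj
    have h1 : ((2*i + r : ℕ) : ZMod (2*m)) ∈ bedge m r j := by
      rw [← hij, bedge, Sym2.mem_iff]; left; rfl
    have h2 := mem_bedge_val (by omega) hr hj h1
    rw [ZMod.val_natCast, Nat.mod_eq_of_lt (by omega)] at h2
    omega
  refine ⟨?_, ?_, ?_, ?_⟩
  · rw [Mpar, Finset.card_image_of_injOn hinj, Finset.card_range]
  · intro e he
    rw [Mpar, Finset.mem_image] at he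
    obtain ⟨i, hi, rfl⟩ := he
    rw [Finset.mem_range] at hi
    rw [bedge, Sym2.isDiag_iff_proj_eq]
    intro h
    have h2 := congrArg ZMod.val h
    have h1 : ((2*i + r : ℕ) : ZMod (2*m)) + 1 = ((2*i + r + 1 : ℕ) : ZMod (2*m)) := by
      push_cast; ring
    rw [h1, ZMod.val_natCast, ZMod.val_natCast, Nat.mod_eq_of_lt (by omega)] at h2
    rcases Nat.lt_or_ge (2*i+r+1) (2*m) with hc | hc
    · rw [Nat.mod_eq_of_lt hc] at h2; omega
    · have h3 : 2*i+r+1 = 2*m := by omega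
      rw [h3] at h2; simp at h2; omega
  · intro v
    obtain ⟨i, hi, hvi⟩ := exists_bedge (by omega) hr v
    refine ⟨bedge m r i, ⟨Finset.mem_image_of_mem _ (Finset.mem_range.mpr hi), hvi⟩, ?_⟩
    rintro e ⟨he, hve⟩
    rw [Mpar, Finset.mem_image] at he
    obtain ⟨j, hj, rfl⟩ := he
    rw [Finset.mem_range] at hj
    have h1 := mem_bedge_val (by omega) hr hj hve
    have h2 := mem_bedge_val (by omega) hr hi hvi
    have : j = i := by omega
    rw [this]
  · intro e he f hf
    rw [Mpar, Finset.mem_image] at he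
    obtain ⟨i, _, rfl⟩ := he
    exact boundary_not_cross (by omega) _ f

theorem blockingSet_two_boundary_edges (m : ℕ) (hm : 2 ≤ m)
    (B : Set (Sym2 (ZMod (2 * m)))) (hB : IsBlockingSet m B) :
    ∃ e ∈ B, ∃ f ∈ B, e ≠ f ∧ IsBoundaryEdge m e ∧ IsBoundaryEdge m f := by
  haveI : NeZero (2*m) := ⟨by omega⟩
  obtain ⟨e, he, heB⟩ := hB.2 (Mpar m 0) (isSPM_Mpar hm (by omega))
  obtain ⟨f, hf, hfB⟩ := hB.2 (Mpar m 1) (isSPM_Mpar hm (by omega))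
  rw [Mpar, Finset.mem_image] at he hf
  obtain ⟨i, hi, rfl⟩ := he
  obtain ⟨j, hj, rfl⟩ := hf
  rw [Finset.mem_range] at hi hj
  refine ⟨_, heB, _, hfB, ?_, bedge_boundary, bedge_boundary⟩
  intro hef
  have h1 : ((2*i + 0 : ℕ) : ZMod (2*m)) ∈ bedge m 1 j := by
    rw [← hef, bedge, Sym2.mem_iff]; left; rfl
  have h2 : ((2*j + 1 : ℕ) : ZMod (2*m)) ∈ bedge m 0 i := by
    rw [hef, bedge, Sym2.mem_iff]; left; rfl
  have h3 := mem_bedge_val (by omega) (by omega) hj h1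
  have h4 := mem_bedge_val (by omega) (by omega) hi h2
  rw [ZMod.val_natCast, Nat.mod_eq_of_lt (by omega)] at h3
  rw [ZMod.val_natCast, Nat.mod_eq_of_lt (by omega)] at h4
  omega
end

section
/- Let m ≥ 2 and let v ∈ ZMod (2m). The set of all edges of odd order containing the vertex v is a blocker in CK(2m) (i.e., it has exactly m edges and contains an edge of every SPM). -/
/-! In a non-crossing perfect matching, the vertices strictly inside the arc cut off by a matching
edge `{a, b}` are matched among themselves, so there is an even number of them: every matching
edge joins two vertices at odd cyclic distance. On a cycle of even length `2m` the two arcs between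
two vertices have lengths of equal parity, so such an edge has odd order. Hence the matching edge
at `v` lies in the odd star of `v`, which consists of the `m` edges `{v, v + k}` with `k` odd. -/

open Finset

instance (n : ℕ) (a b : ZMod n) : DecidablePred (inArc n a b) :=
  fun _ => inferInstanceAs (Decidable (_ ∧ _))

section Arcs

variable {n : ℕ} [NeZero n]

lemma card_inArc (a b : ZMod n) : #{z | inArc n a b z} = (b - a).val - 1 := by
  rw [show (b - a).val - 1 = #(Ioo 0 (b - a).val) by simp]
  have hlt := (b - a).val_lt
  refine card_nbij' (fun z => (z - a).val) (fun j => a + j) ?_ ?_ ?_ ?_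
  · intro z hz
    simpa [inArc] using hz
  · intro j hj
    rw [mem_coe, mem_Ioo] at hj
    rw [mem_coe, mem_filter]
    refine ⟨mem_univ _, ?_⟩
    simpa only [inArc, add_sub_cancel_left, ZMod.val_cast_of_lt (hj.2.trans hlt)] using hj
  · intro z _
    simp
  · intro j hj
    rw [mem_coe, mem_Ioo] at hj
    simp only [add_sub_cancel_left, ZMod.val_cast_of_lt (hj.2.trans hlt)]

end Arcs

section EdgeOrder

variable {n : ℕ}

lemma edgeOrder_mk (a b : ZMod n) : edgeOrder s(a, b) = min (a - b).val (b - a).val := rfl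

lemma not_odd_edgeOrder_of_isDiag {e : Sym2 (ZMod n)} (he : e.IsDiag) : ¬ Odd (edgeOrder e) := by
  induction e using Sym2.ind with
  | _ a b =>
    rw [Sym2.mk_isDiag_iff] at he
    simp [he, edgeOrder_mk]

lemma odd_edgeOrder_mk_iff [NeZero n] (hn : Even n) (a b : ZMod n) :
    Odd (edgeOrder s(a, b)) ↔ Odd (b - a).val := by
  have hpar : Odd (a - b).val ↔ Odd (b - a).val := by
    rw [← neg_sub, ZMod.neg_val]
    split_ifs with h
    · simp [h]
    · have := (b - a).val_lt
      simp [Nat.odd_sub' this.le, hn]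
  rw [edgeOrder_mk]
  rcases min_choice (a - b).val (b - a).val with h | h <;> rw [h]
  exact hpar

end EdgeOrder

namespace IsSPM

variable {m : ℕ} {M : Finset (Sym2 (ZMod (2 * m)))}

lemma existsUnique_mk_mem (hM : IsSPM m M) (z : ZMod (2 * m)) : ∃! w, s(z, w) ∈ M := by
  obtain ⟨e, ⟨he, hz⟩, huniq⟩ := hM.2.2.1 z
  obtain ⟨w, rfl⟩ := Sym2.mem_iff_exists.mp hz
  exact ⟨w, he, fun w' hw' => Sym2.congr_right.mp (huniq _ ⟨hw', Sym2.mem_mk_left _ _⟩)⟩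

noncomputable def partner (hM : IsSPM m M) (z : ZMod (2 * m)) : ZMod (2 * m) :=
  (hM.existsUnique_mk_mem z).exists.choose

lemma mk_mem_iff_partner_eq (hM : IsSPM m M) {z w : ZMod (2 * m)} :
    s(z, w) ∈ M ↔ hM.partner z = w := by
  have hp : s(z, hM.partner z) ∈ M := (hM.existsUnique_mk_mem z).exists.choose_spec
  exact ⟨fun h => (hM.existsUnique_mk_mem z).unique hp h, fun h => h ▸ hp⟩

lemma partner_involutive (hM : IsSPM m M) : Function.Involutive hM.partner := fun z => by
  rw [← hM.mk_mem_iff_partner_eq, Sym2.eq_swap, hM.mk_mem_iff_partner_eq]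

lemma partner_ne (hM : IsSPM m M) (z : ZMod (2 * m)) : hM.partner z ≠ z := fun h =>
  hM.2.1 _ (hM.mk_mem_iff_partner_eq.mpr h) (Sym2.mk_isDiag_iff.mpr rfl)

lemma partner_inArc (hM : IsSPM m M) {a b z : ZMod (2 * m)} (hab : s(a, b) ∈ M)
    (hz : inArc (2 * m) a b z) : inArc (2 * m) a b (hM.partner z) := by
  rw [hM.mk_mem_iff_partner_eq] at hab
  have hba : hM.partner b = a := by rw [← hab, hM.partner_involutive]
  have hza : z ≠ a := by rintro rfl; simp [inArc] at hz
  have hzb : z ≠ b := by rintro rfl; exact lt_irrefl _ hz.2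
  by_contra hout
  refine hM.2.2.2 _ (hM.mk_mem_iff_partner_eq.mpr hab) _
    (hM.mk_mem_iff_partner_eq.mpr rfl) ⟨a, b, z, hM.partner z, rfl, rfl, ?_⟩
  refine ⟨?_, hza.symm, ?_, hzb.symm, ?_, (hM.partner_ne z).symm, Or.inl ⟨hz, hout⟩⟩
  · exact hab ▸ (hM.partner_ne a).symm
  · intro h
    exact hzb (by rw [← hab, h, hM.partner_involutive])
  · intro h
    exact hza (by rw [← hba, h, hM.partner_involutive])

lemma odd_val_sub [NeZero m] (hM : IsSPM m M) {a b : ZMod (2 * m)} (hab : s(a, b) ∈ M) :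
    Odd (b - a).val := by
  let p (z : {z // inArc (2 * m) a b z}) : {z // inArc (2 * m) a b z} :=
    ⟨hM.partner z, hM.partner_inArc hab z.2⟩
  have hp : Function.Involutive p := fun z => Subtype.ext (hM.partner_involutive z)
  have hsupp : hp.toPerm.support = univ := eq_univ_of_forall fun z =>
    Equiv.Perm.mem_support.mpr fun h => hM.partner_ne z (congrArg Subtype.val h)
  have heven := Equiv.Perm.two_dvd_card_support (σ := hp.toPerm) (by rw [sq]; exact Equiv.ext hp)
  rw [hsupp, card_univ, Fintype.card_subtype, card_inArc] at heven
  have hne : (b - a).val ≠ 0 := (ZMod.val_ne_zero _).mpr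
    (sub_ne_zero.mpr ((hM.mk_mem_iff_partner_eq.mp hab) ▸ hM.partner_ne a))
  rcases Nat.even_or_odd (b - a).val with ⟨r, hr⟩ | hodd
  · omega
  · exact hodd

end IsSPM

lemma card_filter_odd_val (m : ℕ) [NeZero m] : #{k : ZMod (2 * m) | Odd k.val} = m := by
  have hval (j : ℕ) (hj : j ∈ range m) : ((2 * j + 1 : ℕ) : ZMod (2 * m)).val = 2 * j + 1 :=
    ZMod.val_cast_of_lt (by rw [mem_range] at hj; omega)
  conv_rhs => rw [← card_range m]
  symm
  refine card_nbij' (fun j => ((2 * j + 1 : ℕ) : ZMod (2 * m))) (fun k => k.val / 2) ?_ ?_ ?_ ?_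
  · intro j hj
    simp only [mem_coe, mem_filter, mem_univ, true_and, hval j hj]
    exact odd_two_mul_add_one j
  · intro k hk
    simp only [mem_coe, mem_filter, mem_univ, true_and, mem_range] at hk ⊢
    have := k.val_lt
    omega
  · intro j hj
    simp only [hval j hj]
    omega
  · intro k hk
    simp only [mem_coe, mem_filter, mem_univ, true_and] at hk
    simp only [Nat.two_mul_div_two_add_one_of_odd hk, ZMod.natCast_zmod_val]

lemma setOf_mem_and_odd_edgeOrder_eq_image {n : ℕ} [NeZero n] (hn : Even n) (v : ZMod n) :
    {e : Sym2 (ZMod n) | v ∈ e ∧ Odd (edgeOrder e)} =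
      (fun k => s(v, v + k)) '' {k | Odd k.val} := by
  ext e
  constructor
  · rintro ⟨hv, hodd⟩
    obtain ⟨w, rfl⟩ := Sym2.mem_iff_exists.mp hv
    exact ⟨w - v, (odd_edgeOrder_mk_iff hn v w).mp hodd, by simp only [add_sub_cancel]⟩
  · rintro ⟨k, hk, rfl⟩
    exact ⟨Sym2.mem_mk_left _ _, by rwa [odd_edgeOrder_mk_iff hn, add_sub_cancel_left]⟩

theorem odd_star_is_blocker (m : ℕ) (hm : 2 ≤ m) (v : ZMod (2 * m)) :
    {e : Sym2 (ZMod (2 * m)) | v ∈ e ∧ Odd (edgeOrder e)}.ncard = m ∧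
    IsBlockingSet m {e : Sym2 (ZMod (2 * m)) | v ∈ e ∧ Odd (edgeOrder e)} := by
  have : NeZero m := ⟨by omega⟩
  have hn : Even (2 * m) := even_two_mul m
  refine ⟨?_, fun e he hdiag => not_odd_edgeOrder_of_isDiag hdiag he.2, fun M hM => ?_⟩
  · have hinj : Function.Injective fun k : ZMod (2 * m) => s(v, v + k) := fun k k' h =>
      add_left_cancel (Sym2.congr_right.mp h)
    rw [setOf_mem_and_odd_edgeOrder_eq_image hn, Set.ncard_image_of_injective _ hinj,
      ← coe_filter_univ, Set.ncard_coe_finset, card_filter_odd_val]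
  · obtain ⟨w, hw, -⟩ := hM.existsUnique_mk_mem v
    exact ⟨s(v, w), hw, Sym2.mem_mk_left v w, (odd_edgeOrder_mk_iff hn v w).mpr (hM.odd_val_sub hw)⟩
end

section
/- Let m ≥ 2 and let r ∈ ZMod (2m). The set {{r+ν, r+ν+1} : 0 ≤ ν ≤ m−1} of m consecutive boundary edges is a blocker in CK(2m) (i.e., it has exactly m edges and contains an edge of every SPM). -/
section Aux

variable {m : ℕ}

private lemma cast_injOn {x y : ℕ} (hx : x < 2*m) (hy : y < 2*m)
    (h : (x : ZMod (2*m)) = y) : x = y := by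
  have := congrArg ZMod.val h
  rwa [ZMod.val_natCast_of_lt hx, ZMod.val_natCast_of_lt hy] at this

private lemma val_sub_of_le {x a : ℕ} (hax : a ≤ x) (hx : x < 2*m) :
    ((x : ZMod (2*m)) - a).val = x - a := by
  have h1 : ((x - a : ℕ) : ZMod (2*m)) = (x : ZMod (2*m)) - a := by
    rw [Nat.cast_sub hax]
  rw [← h1, ZMod.val_natCast_of_lt (by omega)]

private lemma val_sub_of_gt {c a : ℕ} (hca : c < a) (ha : a < 2*m) :
    ((c : ZMod (2*m)) - a).val = 2*m - a + c := by
  have h1 : ((2*m - a + c : ℕ) : ZMod (2*m)) = (c : ZMod (2*m)) - a := by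
    rw [Nat.cast_add, Nat.cast_sub ha.le, ZMod.natCast_self]
    ring
  rw [← h1, ZMod.val_natCast_of_lt (by omega)]

private lemma spm_edge_unique {M : Finset (Sym2 (ZMod (2*m)))} (hM : IsSPM m M)
    {e f : Sym2 (ZMod (2*m))} {v : ZMod (2*m)} (he : e ∈ M) (hve : v ∈ e)
    (hf : f ∈ M) (hvf : v ∈ f) : e = f := by
  obtain ⟨g, _, hu⟩ := hM.2.2.1 v
  rw [hu e ⟨he, hve⟩, hu f ⟨hf, hvf⟩]

private lemma spm_partner {M : Finset (Sym2 (ZMod (2*m)))} (hM : IsSPM m M)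
    (v : ZMod (2*m)) : ∃ w, w ≠ v ∧ s(v, w) ∈ M := by
  obtain ⟨e, ⟨he, hve⟩, _⟩ := hM.2.2.1 v
  refine ⟨Sym2.Mem.other hve, Sym2.other_ne (hM.2.1 e he) hve, ?_⟩
  rwa [Sym2.other_spec hve]

private lemma key (hm : 2 ≤ m) (r : ZMod (2*m)) {M : Finset (Sym2 (ZMod (2*m)))}
    (hM : IsSPM m M) :
    ∀ k a b : ℕ, b - a ≤ k → a < b → b ≤ m →
      s(r + (a : ZMod (2*m)), r + (b : ZMod (2*m))) ∈ M →
    ∃ ν : ℕ, ν < m ∧ s(r + (ν : ZMod (2*m)), r + (ν : ZMod (2*m)) + 1) ∈ M := by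
  haveI : NeZero (2*m) := ⟨by omega⟩
  intro k
  induction k with
  | zero => intro a b hk hab _ _; omega
  | succ k ih =>
    intro a b hk hab hbm heM
    by_cases hb1 : b = a + 1
    · refine ⟨a, by omega, ?_⟩
      have h1 : r + ((b : ℕ) : ZMod (2*m)) = r + (a : ZMod (2*m)) + 1 := by
        rw [hb1]; push_cast; ring
      rwa [h1] at heM
    · -- b ≥ a + 2
      have hba2 : a + 2 ≤ b := by omega
      set v : ZMod (2*m) := r + ((a + 1 : ℕ) : ZMod (2*m)) with hv
      obtain ⟨w, hwv, hfM⟩ := spm_partner hM v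
      set c : ℕ := (w - r).val with hcdef
      have hcv : ((c : ℕ) : ZMod (2*m)) = w - r := by
        rw [hcdef, ZMod.natCast_val, ZMod.cast_id]
      have hw : w = r + (c : ZMod (2*m)) := by rw [hcv]; ring
      have hclt : c < 2*m := ZMod.val_lt _
      -- distinctness
      have hmlt : m < 2*m := by omega
      have hvda : v ≠ r + (a : ZMod (2*m)) := by
        intro h
        have h' : ((a + 1 : ℕ) : ZMod (2*m)) = ((a : ℕ) : ZMod (2*m)) := add_left_cancel h
        have := cast_injOn (x := a + 1) (y := a) (by omega) (by omega) h'
        omega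
      have hvdb : v ≠ r + (b : ZMod (2*m)) := by
        intro h
        have h' : ((a + 1 : ℕ) : ZMod (2*m)) = ((b : ℕ) : ZMod (2*m)) := add_left_cancel h
        have := cast_injOn (x := a + 1) (y := b) (by omega) (by omega) h'
        omega
      have hab' : r + (a : ZMod (2*m)) ≠ r + (b : ZMod (2*m)) := by
        intro h
        have h' : ((a : ℕ) : ZMod (2*m)) = ((b : ℕ) : ZMod (2*m)) := add_left_cancel h
        have := cast_injOn (x := a) (y := b) (by omega) (by omega) h'
        omega
      have hef : s(r + (a : ZMod (2*m)), r + (b : ZMod (2*m))) ≠ s(v, w) := by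
        intro h
        have hvmem : v ∈ s(r + (a : ZMod (2*m)), r + (b : ZMod (2*m))) := by
          rw [h]; exact Sym2.mem_mk_left _ _
        rcases Sym2.mem_iff.1 hvmem with h' | h'
        · exact hvda h'
        · exact hvdb h'
      have hwa : w ≠ r + (a : ZMod (2*m)) := by
        intro h
        exact hef (spm_edge_unique hM heM (Sym2.mem_mk_left _ _) hfM (by rw [← h]; exact Sym2.mem_mk_right _ _))
      have hwb : w ≠ r + (b : ZMod (2*m)) := by
        intro h
        exact hef (spm_edge_unique hM heM (Sym2.mem_mk_right _ _) hfM (by rw [← h]; exact Sym2.mem_mk_right _ _))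
      have hca : c ≠ a := by
        intro h; exact hwa (by rw [hw, h])
      have hcb : c ≠ b := by
        intro h; exact hwb (by rw [hw, h])
      have hca1 : c ≠ a + 1 := by
        intro h
        apply hwv
        rw [hw, hv, h]
      by_cases hmid : a < c ∧ c < b
      · -- recurse
        have hgap : c - (a+1) ≤ k := by omega
        have hc2 : a + 1 < c := by omega
        have hcm : c ≤ m := by omega
        exact ih (a+1) c hgap hc2 hcm (by rw [hw] at hfM; exact hfM)
      · -- build crossing, contradiction
        exfalso
        apply hM.2.2.2 _ heM _ hfM
        refine ⟨r + (a : ZMod (2*m)), r + (b : ZMod (2*m)), v, w, rfl, rfl,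
          hab', hvda.symm, hwa.symm, hvdb.symm, hwb.symm, hwv.symm, ?_⟩
        have hsub : ∀ x : ℕ, (r + (x : ZMod (2*m))) - (r + (a : ZMod (2*m))) =
            (x : ZMod (2*m)) - (a : ZMod (2*m)) := by intro x; ring
        have hvval : (v - (r + (a : ZMod (2*m)))).val = 1 := by
          rw [hv, hsub, val_sub_of_le (by omega) (by omega)]
          omega
        have hbval : ((r + (b : ZMod (2*m))) - (r + (a : ZMod (2*m)))).val = b - a := by
          rw [hsub, val_sub_of_le (by omega) (by omega)]
        left
        constructor
        · exact ⟨by omega, by rw [hvval, hbval]; omega⟩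
        · intro ⟨h1, h2⟩
          rw [hbval] at h2
          have hwsub : (w - (r + (a : ZMod (2*m)))).val = ((c : ZMod (2*m)) - (a : ZMod (2*m))).val := by
            rw [hw, hsub]
          rcases Nat.lt_or_ge c a with hlt | hge
          · rw [hwsub, val_sub_of_gt hlt (by omega)] at h2
            omega
          · have : b < c := by
              rcases Nat.lt_or_ge b c with h' | h'
              · exact h'
              · omega
            rw [hwsub, val_sub_of_le (by omega) hclt] at h2
            omega

private lemma exists_inner_edge (hm : 2 ≤ m) (r : ZMod (2*m))
    {M : Finset (Sym2 (ZMod (2*m)))} (hM : IsSPM m M) :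
    ∃ a b : ℕ, a < b ∧ b ≤ m ∧ s(r + (a : ZMod (2*m)), r + (b : ZMod (2*m))) ∈ M := by
  haveI : NeZero (2*m) := ⟨by omega⟩
  by_contra hcon
  push_neg at hcon
  have hstep : ∀ i : ℕ, i ≤ m → ∃ c : ℕ, m < c ∧ c < 2*m ∧
      s(r + (i : ZMod (2*m)), r + (c : ZMod (2*m))) ∈ M := by
    intro i hi
    obtain ⟨w, hwv, hfM⟩ := spm_partner hM (r + (i : ZMod (2*m)))
    set c : ℕ := (w - r).val with hcdef
    have hcv : ((c : ℕ) : ZMod (2*m)) = w - r := by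
      rw [hcdef, ZMod.natCast_val, ZMod.cast_id]
    have hw : w = r + (c : ZMod (2*m)) := by rw [hcv]; ring
    have hclt : c < 2*m := ZMod.val_lt _
    have hci : c ≠ i := by
      intro h; exact hwv (by rw [hw, h])
    refine ⟨c, ?_, hclt, by rwa [hw] at hfM⟩
    by_contra hle
    push_neg at hle
    rcases lt_or_gt_of_ne hci with h | h
    · exact hcon c i h hi (by rw [Sym2.eq_swap]; rw [hw] at hfM; exact hfM)
    · exact hcon i c h hle (by rw [hw] at hfM; exact hfM)
  have hstep' : ∀ i : ℕ, ∃ c : ℕ, i ≤ m → (m < c ∧ c < 2*m ∧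
      s(r + (i : ZMod (2*m)), r + (c : ZMod (2*m))) ∈ M) := by
    intro i
    by_cases h : i ≤ m
    · exact (hstep i h).imp fun c hc _ => hc
    · exact ⟨0, fun h' => absurd h' h⟩
  choose F hF using hstep'
  have hinj : Set.InjOn F (Finset.range (m+1)) := by
    intro i hi j hj hij
    simp only [Finset.coe_range, Set.mem_Iio] at hi hj
    obtain ⟨_, hFi2, hFi3⟩ := hF i (by omega)
    obtain ⟨_, hFj2, hFj3⟩ := hF j (by omega)
    rw [hij] at hFi3
    have hmem : (r + ((F j : ℕ) : ZMod (2*m))) ∈ s(r + (i : ZMod (2*m)), r + ((F j : ℕ) : ZMod (2*m))) :=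
      Sym2.mem_mk_right _ _
    have heq := spm_edge_unique hM hFi3 hmem hFj3 (Sym2.mem_mk_right _ _)
    have := Sym2.congr_left.1 heq
    have : (i : ZMod (2*m)) = (j : ZMod (2*m)) := add_left_cancel this
    exact cast_injOn (by omega) (by omega) this
  have hmaps : ∀ i ∈ Finset.range (m+1), F i ∈ Finset.Ico (m+1) (2*m) := by
    intro i hi
    rw [Finset.mem_range] at hi
    obtain ⟨h1, h2, _⟩ := hF i (by omega)
    rw [Finset.mem_Ico]
    omega
  have := Finset.card_le_card_of_injOn F hmaps hinj
  rw [Finset.card_range, Nat.card_Ico] at this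
  omega

end Aux

theorem consecutive_boundary_edges_blocker (m : ℕ) (hm : 2 ≤ m) (r : ZMod (2 * m)) :
    IsBlocker m ((Finset.range m).image
      (fun ν : ℕ => s(r + (ν : ZMod (2 * m)), r + (ν : ZMod (2 * m)) + 1))) := by
  haveI : NeZero (2*m) := ⟨by omega⟩
  constructor
  · constructor
    · intro e he
      simp only [Finset.coe_image, Set.mem_image, Finset.mem_coe, Finset.mem_range] at he
      obtain ⟨ν, hν, rfl⟩ := he
      rw [Sym2.isDiag_iff_proj_eq]
      intro h
      have h' : r + (ν : ZMod (2*m)) = r + ((ν : ZMod (2*m)) + 1) := by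
        rw [← add_assoc]; exact h
      have h0 := add_left_cancel h'
      have h1 : ((1 : ℕ) : ZMod (2*m)) = ((0 : ℕ) : ZMod (2*m)) := by
        push_cast
        linear_combination -h0
      have := cast_injOn (x := 1) (y := 0) (by omega) (by omega) h1
      omega
    · intro M hM
      obtain ⟨a, b, hab, hbm, hE⟩ := exists_inner_edge hm r hM
      obtain ⟨ν, hν, hmem⟩ := key hm r hM (b - a) a b le_rfl hab hbm hE
      refine ⟨_, hmem, ?_⟩
      simp only [Finset.coe_image, Set.mem_image, Finset.mem_coe, Finset.mem_range]
      exact ⟨ν, hν, rfl⟩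
  · rw [Finset.card_image_of_injOn, Finset.card_range]
    intro x hx y hy h
    simp only [Finset.coe_range, Set.mem_Iio] at hx hy
    rw [Sym2.eq_iff] at h
    rcases h with ⟨h1, _⟩ | ⟨h1, h2⟩
    · have : (x : ZMod (2*m)) = y := add_left_cancel h1
      exact cast_injOn (by omega) (by omega) this
    · exfalso
      have e1 : (x : ZMod (2*m)) = (y : ZMod (2*m)) + 1 := by
        linear_combination h1
      have e2 : (x : ZMod (2*m)) + 1 = (y : ZMod (2*m)) := by
        linear_combination h2
      have hkey : ((y + 2 : ℕ) : ZMod (2*m)) = ((y : ℕ) : ZMod (2*m)) := by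
        push_cast
        linear_combination e2 - e1
      have := cast_injOn (x := y + 2) (y := y) (by omega) (by omega) hkey
      omega
end

section
/- Let m ≥ 2, let B be a blocker in CK(2m), and let l be an integer with 1 ≤ l ≤ m. Then B contains exactly one edge of the parallel class M_l = {{i,j} : i ≠ j, i + j ≡ 2l−1 (mod 2m)}. -/
/-!
Chords with a common sum `c` are pairwise non-crossing, and when `c` is odd every vertex `v` lies
on exactly one of them, `{v, c - v}`; so each parallel class is a simple perfect matching, and a
blocker meets all `m` of them. The classes are disjoint and the blocker has only `m` edges, so it
meets each class exactly once.
-/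

lemma edgeSum_mk {n : ℕ} (a b : ZMod n) : edgeSum s(a, b) = a + b := rfl

lemma eq_mk_sub_edgeSum_of_mem {n : ℕ} {e : Sym2 (ZMod n)} {v : ZMod n} (hv : v ∈ e) :
    e = s(v, edgeSum e - v) := by
  induction e using Sym2.ind with
  | _ a b =>
    rcases Sym2.mem_iff.mp hv with rfl | rfl
    · simp [edgeSum_mk]
    · simp [edgeSum_mk, Sym2.eq_swap]

/- With `x = (c - a).val` and `y = (b - c).val` we have `(d - a).val = y` and
`(b - a).val = (x + y) % n`, so each of `c`, `d` lies on the arc from `a` to `b` iff `x + y < n`. -/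
lemma inArc_iff_inArc_of_add_eq {n : ℕ} [NeZero n] {a b c d : ZMod n}
    (hsum : a + b = c + d) (hca : c ≠ a) (hbc : b ≠ c) :
    inArc n a b c ↔ inArc n a b d := by
  have hd : d - a = b - c := by linear_combination -hsum
  have hx : (c - a).val ≠ 0 := by rwa [Ne, ZMod.val_eq_zero, sub_eq_zero]
  have hy : (b - c).val ≠ 0 := by rwa [Ne, ZMod.val_eq_zero, sub_eq_zero]
  have hxn : (c - a).val < n := ZMod.val_lt _
  have hyn : (b - c).val < n := ZMod.val_lt _
  have hba : (b - a).val = ((c - a).val + (b - c).val) % n := by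
    rw [← ZMod.val_add, sub_add_sub_cancel']
  simp only [inArc, hd, hba]
  rcases lt_or_ge ((c - a).val + (b - c).val) n with hlt | hge
  · rw [Nat.mod_eq_of_lt hlt]; omega
  · rw [Nat.mod_eq_sub_mod hge, Nat.mod_eq_of_lt (by omega)]; omega

lemma not_cross_of_edgeSum_eq {n : ℕ} [NeZero n] {e f : Sym2 (ZMod n)}
    (h : edgeSum e = edgeSum f) : ¬ Cross n e f := by
  rintro ⟨a, b, c, d, rfl, rfl, -, hac, -, hbc, -, -, hx⟩
  have hiff := inArc_iff_inArc_of_add_eq h hac.symm hbc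
  rcases hx with ⟨h1, h2⟩ | ⟨h1, h2⟩
  · exact h2 (hiff.mp h1)
  · exact h2 (hiff.mpr h1)

/-- The paper's `M_l` is `parallelClass (2 * m) (2 * l - 1)`. -/
def parallelClass (n : ℕ) [NeZero n] (c : ZMod n) : Finset (Sym2 (ZMod n)) :=
  Finset.univ.image fun i => s(i, c - i)

section ParallelClass

variable {n : ℕ} [NeZero n] {c : ZMod n}

lemma mem_parallelClass {e : Sym2 (ZMod n)} : e ∈ parallelClass n c ↔ edgeSum e = c := by
  constructor
  · simp only [parallelClass, Finset.mem_image, Finset.mem_univ, true_and]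
    rintro ⟨i, rfl⟩
    simp [edgeSum_mk]
  · intro h
    refine Finset.mem_image.mpr ⟨e.out.1, Finset.mem_univ _, ?_⟩
    rw [← h, ← eq_mk_sub_edgeSum_of_mem (Sym2.out_fst_mem e)]

lemma not_isDiag_of_mem_parallelClass (hc : ∀ i, i + i ≠ c) {e : Sym2 (ZMod n)}
    (he : e ∈ parallelClass n c) : ¬ e.IsDiag := by
  obtain ⟨i, -, rfl⟩ := Finset.mem_image.mp he
  rw [Sym2.mk_isDiag_iff]
  intro h
  exact hc i (by rw [eq_sub_iff_add_eq.mp h])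

lemma two_mul_card_parallelClass (hc : ∀ i, i + i ≠ c) : 2 * (parallelClass n c).card = n := by
  have hfiber : ∀ e ∈ parallelClass n c,
      (Finset.univ.filter fun i => s(i, c - i) = e) = e.toFinset := by
    intro e he
    ext i
    simp only [Finset.mem_filter, Finset.mem_univ, true_and, Sym2.mem_toFinset]
    rw [← mem_parallelClass.mp he]
    exact ⟨fun h => h ▸ Sym2.mem_mk_left _ _, fun h => (eq_mk_sub_edgeSum_of_mem h).symm⟩
  calc 2 * (parallelClass n c).card
      = ∑ e ∈ parallelClass n c, e.toFinset.card := by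
        rw [Finset.sum_congr rfl fun e he =>
          Sym2.card_toFinset_of_not_isDiag e (not_isDiag_of_mem_parallelClass hc he),
          Finset.sum_const, smul_eq_mul, mul_comm]
    _ = (Finset.univ : Finset (ZMod n)).card := by
        rw [Finset.card_eq_sum_card_image (fun i => s(i, c - i)) Finset.univ]
        exact Finset.sum_congr rfl fun e he => by rw [hfiber e he]
    _ = n := by rw [Finset.card_univ, ZMod.card]

end ParallelClass

lemma isSPM_parallelClass {m : ℕ} [NeZero m] {c : ZMod (2 * m)} (hc : ∀ i, i + i ≠ c) :
    IsSPM m (parallelClass (2 * m) c) := by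
  refine ⟨by have := two_mul_card_parallelClass hc; omega,
    fun e => not_isDiag_of_mem_parallelClass hc, fun v => ?_, fun e he f hf => ?_⟩
  · refine ⟨s(v, c - v),
      ⟨mem_parallelClass.mpr (by simp [edgeSum_mk]), Sym2.mem_mk_left _ _⟩, ?_⟩
    rintro e ⟨he, hv⟩
    rw [eq_mk_sub_edgeSum_of_mem hv, mem_parallelClass.mp he]
  · exact not_cross_of_edgeSum_eq (by rw [mem_parallelClass.mp he, mem_parallelClass.mp hf])

lemma add_self_ne_natCast_of_odd {m k : ℕ} (hk : Odd k) (i : ZMod (2 * m)) :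
    i + i ≠ (k : ZMod (2 * m)) := by
  intro h
  have h2 := congrArg (ZMod.castHom (dvd_mul_right 2 m) (ZMod 2)) h
  rw [map_add, map_natCast, ZMod.natCast_eq_one_iff_odd.mpr hk, ← two_mul,
    show (2 : ZMod 2) = 0 from rfl, zero_mul] at h2
  exact zero_ne_one h2

namespace IsBlocker

variable {m : ℕ} [NeZero m] {B : Finset (Sym2 (ZMod (2 * m)))}

lemma exists_mem_edgeSum_eq (hB : IsBlocker m B) {c : ZMod (2 * m)} (hc : ∀ i, i + i ≠ c) :
    ∃ e ∈ B, edgeSum e = c := by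
  obtain ⟨e, he, heB⟩ := hB.1.2 _ (isSPM_parallelClass hc)
  exact ⟨e, heB, mem_parallelClass.mp he⟩

lemma injOn_edgeSum (hB : IsBlocker m B) : Set.InjOn edgeSum (B : Set (Sym2 (ZMod (2 * m)))) := by
  set oddSums := (Finset.Icc 1 m).image fun k => ((2 * k - 1 : ℕ) : ZMod (2 * m))
  have hodd : oddSums.card = m := by
    rw [Finset.card_image_of_injOn, Nat.card_Icc, Nat.add_sub_cancel]
    intro k hk k' hk' h
    simp only [Finset.coe_Icc, Set.mem_Icc] at hk hk'
    rw [ZMod.natCast_eq_natCast_iff', Nat.mod_eq_of_lt (by omega),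
      Nat.mod_eq_of_lt (by omega)] at h
    omega
  have hsub : oddSums ⊆ B.image edgeSum := by
    intro c hc
    obtain ⟨k, hk, rfl⟩ := Finset.mem_image.mp hc
    obtain ⟨e, heB, he⟩ := hB.exists_mem_edgeSum_eq
      (add_self_ne_natCast_of_odd (k := 2 * k - 1) ⟨k - 1, by rw [Finset.mem_Icc] at hk; omega⟩)
    exact Finset.mem_image.mpr ⟨e, heB, he⟩
  refine Finset.card_image_iff.mp (le_antisymm Finset.card_image_le ?_)
  calc B.card = oddSums.card := hB.2.trans hodd.symm
    _ ≤ (B.image edgeSum).card := Finset.card_le_card hsub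

end IsBlocker

theorem blocker_meets_parallel_class_once_general (m l : ℕ)
    (hl1 : 1 ≤ l) (hlm : l ≤ m)
    (B : Finset (Sym2 (ZMod (2 * m)))) (hB : IsBlocker m B) :
    ∃! e : Sym2 (ZMod (2 * m)),
      e ∈ B ∧ ¬ e.IsDiag ∧ edgeSum e = ((2 * l - 1 : ℕ) : ZMod (2 * m)) := by
  have : NeZero m := ⟨by omega⟩
  obtain ⟨e, heB, he⟩ := hB.exists_mem_edgeSum_eq
    (add_self_ne_natCast_of_odd (k := 2 * l - 1) ⟨l - 1, by omega⟩)
  refine ⟨e, ⟨heB, hB.1.1 e heB, he⟩, fun e' he' => ?_⟩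
  exact hB.injOn_edgeSum he'.1 heB (he'.2.2.trans he.symm)

theorem blocker_meets_parallel_class_once (m l : ℕ) (hm : 2 ≤ m)
    (hl1 : 1 ≤ l) (hlm : l ≤ m)
    (B : Finset (Sym2 (ZMod (2 * m)))) (hB : IsBlocker m B) :
    ∃! e : Sym2 (ZMod (2 * m)),
      e ∈ B ∧ ¬ e.IsDiag ∧ edgeSum e = ((2 * l - 1 : ℕ) : ZMod (2 * m)) :=
  blocker_meets_parallel_class_once_general m l hl1 hlm B hB
end

section
/- Let m ≥ 2 and let i_1, i_2, i_3 be integers with 1 ≤ i_1 < i_2 < i_3 < 2m such that i_2 − i_1 < m, i_3 − i_2 < m, and i_1 + 2m − i_3 < m. Then there exists an SPM M of CK(2m) whose set of boundary edges is exactly {{i_1−1, i_1}, {i_2−1, i_2}, {i_3−1, i_3}}. -/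
/-! Put `k₁ = m - (i₃ - i₂)`, `k₂ = m - (i₁ + 2m - i₃)` and `k₃ = m - (i₂ - i₁)`; by the
hypotheses these are positive and sum to `m`. Starting at vertex `i₁ - k₁`, cut the
polygon into consecutive arcs of `2k₁`, `2k₂`, `2k₃` vertices and match each arc by a rainbow,
the chords nested around its middle edge. The middle edges are `{iⱼ - 1, iⱼ}`; every other chord
skips a vertex on both sides, because each arc has fewer than `2m` vertices.

Crossings are checked by unrolling the polygon from the base vertex onto the line `0, …, 2m - 1`,
where two chords do not cross iff their intervals are disjoint or nested. -/

def Laminar (u v u' v' : ℕ) : Prop :=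
  v < u' ∨ v' < u ∨ (u < u' ∧ v' < v) ∨ (u' < u ∧ v < v')

section CyclicOrder

variable {n : ℕ}

lemma eq_of_add_natCast_eq {b : ZMod n} {u v : ℕ} (hu : u < n) (hv : v < n)
    (h : b + (u : ZMod n) = b + v) : u = v := by
  rwa [add_right_inj, ZMod.natCast_eq_natCast_iff', Nat.mod_eq_of_lt hu,
    Nat.mod_eq_of_lt hv] at h

lemma val_natCast_sub_natCast {u z : ℕ} (hu : u < n) (hz : z < n) :
    ((z : ZMod n) - u).val = if u ≤ z then z - u else z + n - u := by
  split_ifs with h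
  · rw [← Nat.cast_sub h, ZMod.val_natCast_of_lt (by omega)]
  · have : (z : ZMod n) - u = ((z + n - u : ℕ) : ZMod n) := by
      rw [Nat.cast_sub (by omega), Nat.cast_add, ZMod.natCast_self, add_zero]
    rw [this, ZMod.val_natCast_of_lt (by omega)]

lemma inArc_add_natCast_iff (b : ZMod n) {u v z : ℕ} (hu : u < n) (hv : v < n) (hz : z < n) :
    inArc n (b + u) (b + v) (b + z) ↔ (u < v ∧ u < z ∧ z < v) ∨ (v < u ∧ (u < z ∨ z < v)) := by
  rw [inArc, add_sub_add_left_eq_sub, add_sub_add_left_eq_sub, val_natCast_sub_natCast hu hz,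
    val_natCast_sub_natCast hu hv]
  split_ifs <;> omega

lemma not_cross_of_laminar (b : ZMod n) {u v u' v' : ℕ} (huv : u < v) (hu'v' : u' < v')
    (hv : v < n) (hv' : v' < n) (h : Laminar u v u' v') :
    ¬ Cross n s(b + u, b + v) s(b + u', b + v') := by
  rintro ⟨a, c, d, e, hac, hde, -, -, -, -, -, -, hx⟩
  unfold Laminar at h
  rw [Sym2.eq_iff] at hac hde
  rcases hac with ⟨rfl, rfl⟩ | ⟨rfl, rfl⟩ <;> rcases hde with ⟨rfl, rfl⟩ | ⟨rfl, rfl⟩ <;>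
    rcases hx with ⟨hin, hout⟩ | ⟨hin, hout⟩ <;>
    simp (disch := omega) only [inArc_add_natCast_iff] at hin hout <;> omega

end CyclicOrder

lemma not_cross_self {n : ℕ} (e : Sym2 (ZMod n)) : ¬ Cross n e e := by
  rintro ⟨a, b, c, d, rfl, h, -, hac, had, -⟩
  rcases Sym2.eq_iff.1 h with ⟨h, -⟩ | ⟨h, -⟩
  exacts [hac h, had h]

lemma isBoundaryEdge_add_natCast_iff {m u v : ℕ} (b : ZMod (2 * m)) (huv : u < v)
    (hv : v < 2 * m) :
    IsBoundaryEdge m s(b + u, b + v) ↔ v = u + 1 ∨ (u = 0 ∧ v + 1 = 2 * m) := by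
  constructor
  · rintro ⟨i, hi⟩
    rcases Sym2.eq_iff.1 hi with ⟨rfl, hvi⟩ | ⟨hui, rfl⟩
    · left
      refine eq_of_add_natCast_eq (b := b) hv (by omega) ?_
      rw [hvi, Nat.cast_succ, add_assoc]
    · have hcast : ((u : ℕ) : ZMod (2 * m)) = ((v + 1 : ℕ) : ZMod (2 * m)) := by
        rw [Nat.cast_succ, ← add_right_inj b, hui, add_assoc]
      rw [ZMod.natCast_eq_natCast_iff', Nat.mod_eq_of_lt (by omega : u < 2 * m)] at hcast
      rcases (by omega : v + 1 < 2 * m ∨ v + 1 = 2 * m) with hlt | heq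
      · rw [Nat.mod_eq_of_lt hlt] at hcast; omega
      · rw [heq, Nat.mod_self] at hcast; omega
  · rintro (rfl | ⟨rfl, hv⟩)
    · exact ⟨b + u, by rw [Nat.cast_succ, add_assoc]⟩
    · refine ⟨b + v, Sym2.eq_swap.trans ?_⟩
      rw [add_assoc, ← Nat.cast_add_one, hv, ZMod.natCast_self, Nat.cast_zero]

/-- Chords of a matching of `2 * m₁` points, followed by those of a second matching shifted to
the right of them. -/
def appendBlock (m₁ : ℕ) (f g : ℕ → ℕ) (t : ℕ) : ℕ :=
  if t < m₁ then f t else 2 * m₁ + g (t - m₁)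

def rainbowLeft (k t : ℕ) : ℕ := k - 1 - t

def rainbowRight (k t : ℕ) : ℕ := k + t

def rainbowsLeft : List ℕ → ℕ → ℕ
  | [] => fun _ => 0
  | k :: ks => appendBlock k (rainbowLeft k) (rainbowsLeft ks)

def rainbowsRight : List ℕ → ℕ → ℕ
  | [] => fun _ => 0
  | k :: ks => appendBlock k (rainbowRight k) (rainbowsRight ks)

/-- A non-crossing perfect matching of the points `0, …, 2m - 1` of a line, whose `t`-th chord
joins `u t < v t`. -/
structure IsLinearNCMatching (m : ℕ) (u v : ℕ → ℕ) : Prop where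
  lt : ∀ t < m, u t < v t
  lt_two_mul : ∀ t < m, v t < 2 * m
  laminar : ∀ t < m, ∀ t' < m, t ≠ t' → Laminar (u t) (v t) (u t') (v t')
  exists_eq : ∀ z < 2 * m, ∃ t < m, u t = z ∨ v t = z

namespace IsLinearNCMatching

variable {m : ℕ} {u v : ℕ → ℕ}

lemma eq_of_mem (h : IsLinearNCMatching m u v) (b : ZMod (2 * m)) {t t' : ℕ} (ht : t < m)
    (ht' : t' < m) {x : ZMod (2 * m)} (hx : x ∈ s(b + u t, b + v t))
    (hx' : x ∈ s(b + u t', b + v t')) : t = t' := by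
  by_contra hne
  have hlam := h.laminar t ht t' ht' hne
  have := h.lt t ht
  have := h.lt t' ht'
  have := h.lt_two_mul t ht
  have := h.lt_two_mul t' ht'
  unfold Laminar at hlam
  rw [Sym2.mem_iff] at hx hx'
  rcases hx with rfl | rfl <;> rcases hx' with h' | h' <;>
    have := eq_of_add_natCast_eq (by omega) (by omega) h' <;> omega

lemma isSPM (h : IsLinearNCMatching m u v) (hm : 0 < m) (b : ZMod (2 * m)) :
    IsSPM m ((Finset.range m).image fun t => s(b + u t, b + v t)) := by
  have : NeZero (2 * m) := ⟨by omega⟩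
  refine ⟨?_, ?_, fun x => ?_, ?_⟩
  · rw [Finset.card_image_of_injOn, Finset.card_range]
    intro t ht t' ht' (htt' : s(_, _) = s(_, _))
    refine h.eq_of_mem b (Finset.mem_range.1 ht) (Finset.mem_range.1 ht')
      (Sym2.mem_mk_left _ _) ?_
    exact htt' ▸ Sym2.mem_mk_left (b + (u t : ZMod (2 * m))) _
  · simp only [Finset.mem_image, Finset.mem_range]
    rintro _ ⟨t, ht, rfl⟩ hdiag
    exact (h.lt t ht).ne (eq_of_add_natCast_eq ((h.lt t ht).trans (h.lt_two_mul t ht))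
      (h.lt_two_mul t ht) (Sym2.mk_isDiag_iff.1 hdiag))
  · obtain ⟨t, ht, hz⟩ := h.exists_eq (x - b).val (ZMod.val_lt _)
    have hx : x ∈ s(b + u t, b + v t) := by
      rw [Sym2.mem_iff]
      rcases hz with hz | hz <;> [left; right] <;> rw [hz, ZMod.natCast_zmod_val, add_sub_cancel]
    refine ⟨_, ⟨Finset.mem_image_of_mem _ (Finset.mem_range.2 ht), hx⟩, ?_⟩
    rintro _ ⟨he, hxe⟩
    obtain ⟨t', ht', rfl⟩ := Finset.mem_image.1 he
    rw [h.eq_of_mem b (Finset.mem_range.1 ht') ht hxe hx]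
  · simp only [Finset.mem_image, Finset.mem_range]
    rintro _ ⟨t, ht, rfl⟩ _ ⟨t', ht', rfl⟩
    rcases eq_or_ne t t' with rfl | hne
    · exact not_cross_self _
    · exact not_cross_of_laminar b (h.lt t ht) (h.lt t' ht') (h.lt_two_mul t ht)
        (h.lt_two_mul t' ht') (h.laminar t ht t' ht' hne)

lemma setOf_isBoundaryEdge (h : IsLinearNCMatching m u v) (b : ZMod (2 * m))
    (hwrap : ∀ t < m, u t = 0 → v t + 1 < 2 * m) :
    {e | e ∈ (Finset.range m).image (fun t => s(b + u t, b + v t)) ∧ IsBoundaryEdge m e} =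
      (fun t => s(b + v t - 1, b + v t)) '' {t | t < m ∧ v t = u t + 1} := by
  have hpred : ∀ t, v t = u t + 1 →
      s(b + (v t : ZMod (2 * m)) - 1, b + v t) = s(b + u t, b + v t) := fun t hvt => by
    rw [hvt, Nat.cast_succ, ← add_assoc, add_sub_cancel_right]
  ext e
  simp only [Finset.mem_image, Finset.mem_range, Set.mem_image, Set.mem_ofPred_eq]
  constructor
  · rintro ⟨⟨t, ht, rfl⟩, hbd⟩
    rw [isBoundaryEdge_add_natCast_iff b (h.lt t ht) (h.lt_two_mul t ht)] at hbd
    have hvt : v t = u t + 1 := hbd.resolve_right fun ⟨h0, h1⟩ => by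
      have := hwrap t ht h0
      omega
    exact ⟨t, ⟨ht, hvt⟩, hpred t hvt⟩
  · rintro ⟨t, ⟨ht, hvt⟩, rfl⟩
    rw [hpred t hvt, isBoundaryEdge_add_natCast_iff b (h.lt t ht) (h.lt_two_mul t ht)]
    exact ⟨⟨t, ht, rfl⟩, Or.inl hvt⟩

lemma append {m₁ m₂ : ℕ} {u₁ v₁ u₂ v₂ : ℕ → ℕ} (h₁ : IsLinearNCMatching m₁ u₁ v₁)
    (h₂ : IsLinearNCMatching m₂ u₂ v₂) :
    IsLinearNCMatching (m₁ + m₂) (appendBlock m₁ u₁ u₂) (appendBlock m₁ v₁ v₂) where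
  lt t ht := by
    unfold appendBlock
    split_ifs with h
    · exact h₁.lt t h
    · have := h₂.lt (t - m₁) (by omega)
      omega
  lt_two_mul t ht := by
    unfold appendBlock
    split_ifs with h
    · have := h₁.lt_two_mul t h
      omega
    · have := h₂.lt_two_mul (t - m₁) (by omega)
      omega
  laminar t ht t' ht' hne := by
    unfold appendBlock
    split_ifs with h h' h'
    · exact h₁.laminar t h t' h' hne
    · have := h₁.lt_two_mul t h
      exact Or.inl (by omega)
    · have := h₁.lt_two_mul t' h'
      exact Or.inr (Or.inl (by omega))
    · have := h₂.laminar (t - m₁) (by omega) (t' - m₁) (by omega) (by omega)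
      unfold Laminar at this ⊢
      omega
  exists_eq z hz := by
    by_cases h : z < 2 * m₁
    · obtain ⟨t, ht, hzt⟩ := h₁.exists_eq z h
      exact ⟨t, by omega, by simpa only [appendBlock, if_pos ht] using hzt⟩
    · obtain ⟨t, ht, hzt⟩ := h₂.exists_eq (z - 2 * m₁) (by omega)
      refine ⟨m₁ + t, by omega, ?_⟩
      simp only [appendBlock, if_neg (show ¬ m₁ + t < m₁ by omega), Nat.add_sub_cancel_left]
      omega

end IsLinearNCMatching

lemma isLinearNCMatching_rainbow (k : ℕ) :
    IsLinearNCMatching k (rainbowLeft k) (rainbowRight k) where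
  lt t ht := by unfold rainbowLeft rainbowRight; omega
  lt_two_mul t ht := by unfold rainbowRight; omega
  laminar t ht t' ht' hne := by unfold Laminar rainbowLeft rainbowRight; omega
  exists_eq z hz := by
    by_cases h : z < k
    · exact ⟨k - 1 - z, by omega, Or.inl (by unfold rainbowLeft; omega)⟩
    · exact ⟨z - k, by omega, Or.inr (by unfold rainbowRight; omega)⟩

lemma isLinearNCMatching_rainbows (ks : List ℕ) :
    IsLinearNCMatching ks.sum (rainbowsLeft ks) (rainbowsRight ks) := by
  induction ks with
  | nil => exact ⟨by simp, by simp, by simp, by simp⟩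
  | cons k ks ih => exact (isLinearNCMatching_rainbow k).append ih

section ThreeRainbows

variable {k₁ k₂ k₃ m : ℕ}

lemma rainbowsRight_three_centres (h₁ : 0 < k₁) (h₂ : 0 < k₂) :
    rainbowsRight [k₁, k₂, k₃] 0 = k₁ ∧ rainbowsRight [k₁, k₂, k₃] k₁ = 2 * k₁ + k₂ ∧
      rainbowsRight [k₁, k₂, k₃] (k₁ + k₂) = 2 * k₁ + 2 * k₂ + k₃ := by
  refine ⟨?_, ?_, ?_⟩ <;> simp only [rainbowsRight, appendBlock, rainbowRight] <;>
    split_ifs <;> omega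

lemma rainbows_three_no_wrap (h₁ : 0 < k₁) (h₃ : 0 < k₃) (hm : k₁ + k₂ + k₃ = m) :
    ∀ t < m, rainbowsLeft [k₁, k₂, k₃] t = 0 → rainbowsRight [k₁, k₂, k₃] t + 1 < 2 * m := by
  intro t ht
  simp only [rainbowsLeft, rainbowsRight, appendBlock, rainbowLeft, rainbowRight]
  split_ifs <;> omega

lemma setOf_rainbows_three_adjacent (h₁ : 0 < k₁) (h₂ : 0 < k₂) (h₃ : 0 < k₃)
    (hm : k₁ + k₂ + k₃ = m) :
    {t | t < m ∧ rainbowsRight [k₁, k₂, k₃] t = rainbowsLeft [k₁, k₂, k₃] t + 1} =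
      {0, k₁, k₁ + k₂} := by
  ext t
  simp only [Set.mem_ofPred_eq, Set.mem_insert_iff, Set.mem_singleton_iff, rainbowsLeft,
    rainbowsRight, appendBlock, rainbowLeft, rainbowRight]
  split_ifs <;> omega

end ThreeRainbows

theorem triangular_SPM_exists_general (m : ℕ) (i₁ i₂ i₃ : ℕ)
    (d1 : i₂ - i₁ < m) (d2 : i₃ - i₂ < m) (d3 : i₁ + 2 * m - i₃ < m) :
    ∃ M : Finset (Sym2 (ZMod (2 * m))), IsSPM m M ∧
      {e : Sym2 (ZMod (2 * m)) | e ∈ M ∧ IsBoundaryEdge m e} =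
        {s((i₁ : ZMod (2 * m)) - 1, (i₁ : ZMod (2 * m))),
         s((i₂ : ZMod (2 * m)) - 1, (i₂ : ZMod (2 * m))),
         s((i₃ : ZMod (2 * m)) - 1, (i₃ : ZMod (2 * m)))} := by
  set k₁ := m - (i₃ - i₂) with hk₁
  set k₂ := m - (i₁ + 2 * m - i₃) with hk₂
  set k₃ := m - (i₂ - i₁) with hk₃
  have pos₁ : 0 < k₁ := by omega
  have pos₂ : 0 < k₂ := by omega
  have pos₃ : 0 < k₃ := by omega
  have hsum : k₁ + k₂ + k₃ = m := by omega
  have hmatch :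
      IsLinearNCMatching m (rainbowsLeft [k₁, k₂, k₃]) (rainbowsRight [k₁, k₂, k₃]) := by
    simpa only [List.sum_cons, List.sum_nil, add_zero, ← add_assoc, hsum] using
      isLinearNCMatching_rainbows [k₁, k₂, k₃]
  set b : ZMod (2 * m) := i₁ - k₁
  have hb : ∀ w j : ℕ, i₁ + w = j + k₁ → b + w = j := fun w j h => by
    rw [sub_add_eq_add_sub, ← Nat.cast_add, h, Nat.cast_add, add_sub_cancel_right]
  obtain ⟨c₁, c₂, c₃⟩ := rainbowsRight_three_centres (k₃ := k₃) pos₁ pos₂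
  refine ⟨_, hmatch.isSPM (by omega) b, ?_⟩
  rw [hmatch.setOf_isBoundaryEdge b (rainbows_three_no_wrap pos₁ pos₃ hsum),
    setOf_rainbows_three_adjacent pos₁ pos₂ pos₃ hsum, Set.image_insert_eq, Set.image_insert_eq,
    Set.image_singleton, c₁, c₂, c₃, hb k₁ i₁ (by omega), hb (2 * k₁ + k₂) i₂ (by omega),
    hb (2 * k₁ + 2 * k₂ + k₃) i₃ (by omega)]

theorem triangular_SPM_exists (m : ℕ) (hm : 2 ≤ m) (i₁ i₂ i₃ : ℕ)
    (h1 : 1 ≤ i₁) (h12 : i₁ < i₂) (h23 : i₂ < i₃) (h3 : i₃ < 2 * m)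
    (d1 : i₂ - i₁ < m) (d2 : i₃ - i₂ < m) (d3 : i₁ + 2 * m - i₃ < m) :
    ∃ M : Finset (Sym2 (ZMod (2 * m))), IsSPM m M ∧
      {e : Sym2 (ZMod (2 * m)) | e ∈ M ∧ IsBoundaryEdge m e} =
        {s((i₁ : ZMod (2 * m)) - 1, (i₁ : ZMod (2 * m))),
         s((i₂ : ZMod (2 * m)) - 1, (i₂ : ZMod (2 * m))),
         s((i₃ : ZMod (2 * m)) - 1, (i₃ : ZMod (2 * m)))} :=
  triangular_SPM_exists_general m i₁ i₂ i₃ d1 d2 d3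
end

section
/- Let m ≥ 1 and k ≥ 1 be integers, and let i_1 < i_2 < … < i_k be integers with 0 ≤ i_1 and i_k ≤ 2m−1. Then at least one of the following holds: (1) there exist 1 ≤ μ < ν ≤ k with i_ν = i_μ + m; (2) there exists 1 ≤ μ < k with i_{μ+1} > i_μ + m, or i_k < i_1 + m; (3) there exist 1 ≤ μ < ν < τ ≤ k with i_ν < i_μ + m, i_τ < i_ν + m, and i_τ > i_μ + m. -/
/-! If (2) fails, consecutive gaps are at most `m` while the total span is at least `m`, so the
sequence crosses the level `i 1 + m` between some `i n` and `i (n + 1)`. Unless `i (n + 1)` lands exactly on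
`i 1 + m` or on `i n + m` (alternative (1)), the triple `1 < n < n + 1` is as in alternative (3). -/

theorem exists_crossing {α : Type*} [LinearOrder α] (f : ℕ → α) {a b : ℕ} {t : α}
    (hab : a ≤ b) (ha : f a < t) (hb : t ≤ f b) :
    ∃ n, a ≤ n ∧ n < b ∧ f n < t ∧ t ≤ f (n + 1) := by
  induction b, hab using Nat.le_induction with
  | base => exact absurd hb (not_le.2 ha)
  | succ b hab ih =>
    by_cases hfb : t ≤ f b
    · obtain ⟨n, han, hnb, hn⟩ := ih hfb
      exact ⟨n, han, hnb.trans (Nat.lt_succ_self b), hn⟩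
    · exact ⟨b, hab, Nat.lt_succ_self b, not_le.1 hfb, hb⟩

theorem three_options_general (m k : ℕ) (hm : 1 ≤ m) (hk : 1 ≤ k) (i : ℕ → ℤ) :
    (∃ μ ν, 1 ≤ μ ∧ μ < ν ∧ ν ≤ k ∧ i ν = i μ + m) ∨
    ((∃ μ, 1 ≤ μ ∧ μ < k ∧ i μ + m < i (μ + 1)) ∨ i k < i 1 + m) ∨
    (∃ μ ν τ, 1 ≤ μ ∧ μ < ν ∧ ν < τ ∧ τ ≤ k ∧
      i ν < i μ + m ∧ i τ < i ν + m ∧ i μ + m < i τ) := by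
  by_contra! ⟨hopp, ⟨hgap, hspan⟩, htriple⟩
  obtain ⟨n, hn1, hnk, hbelow, habove⟩ :=
    exists_crossing i hk (by omega : i 1 < i 1 + m) hspan
  have hstep : i (n + 1) ≤ i n + m := hgap n hn1 hnk
  have hfar : i 1 + m ≠ i (n + 1) := (hopp 1 (n + 1) le_rfl (by omega) hnk).symm
  have hnear : i (n + 1) ≠ i n + m := hopp n (n + 1) hn1 (by omega) hnk
  have hn : 1 < n := by
    rcases hn1.lt_or_eq with h | rfl
    · exact h
    · exact absurd (le_antisymm habove hstep) hfar
  exact (lt_of_le_of_ne habove hfar).not_ge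
    (htriple 1 n (n + 1) le_rfl hn (by omega) hnk hbelow (lt_of_le_of_ne hstep hnear))

theorem three_options (m k : ℕ) (hm : 1 ≤ m) (hk : 1 ≤ k) (i : ℕ → ℤ)
    (hmono : ∀ μ ν, 1 ≤ μ → μ < ν → ν ≤ k → i μ < i ν)
    (hlb : 0 ≤ i 1) (hub : i k ≤ 2 * (m : ℤ) - 1) :
    (∃ μ ν, 1 ≤ μ ∧ μ < ν ∧ ν ≤ k ∧ i ν = i μ + m) ∨
    ((∃ μ, 1 ≤ μ ∧ μ < k ∧ i μ + m < i (μ + 1)) ∨ i k < i 1 + m) ∨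
    (∃ μ ν τ, 1 ≤ μ ∧ μ < ν ∧ ν < τ ∧ τ ≤ k ∧
      i ν < i μ + m ∧ i τ < i ν + m ∧ i μ + m < i τ) :=
  three_options_general m k hm hk i
end
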